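/- Let n ≥ 1, κ ≥ 1 (with κ ≥ 2 if p = 2), and m ≥ 0 with n ≤ 2m + 1. Let g, h ∈ ℤ_p⟦t⟧ with h having constant term 1, and suppose the coefficient of t^i in Y(g) lies in ℤ_p for all 0 ≤ i ≤ n. If u ∈ ℤ_p⟦t⟧ has constant term 0 and satisfies u ≡ Y(g) (mod (p^κ, t^{m+1})), then the exact Newton iterate N_g(u) = u - h(u)·∫(u'/h(u) - g) satisfies N_g(u) ≡ Y(g) (mod (p^κ, t^{n+1})). -/

import Mathlib

/-!
With `e = u - y` and `H = ∫ h⁻¹`, the equation `y' = g·h(y)` gives `∫(u'/h(u) - g) = H(u) - H(y)`,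
so `N_g(u) - y = e - h(u)·(H(u) - H(y))`. Expanding `h` and `H` in Taylor series around `y`
(with Hasse derivatives `f^[j]`) turns this into `-(h(y)·S + e²·V·h⁻¹(y) + e·V·S)` modulo
`t^{n+1}`, where `V` is integral and `S = ∑_{j ≥ 2} (h⁻¹)^[j-1](y)·e^j/j`, because
`j·H^[j] = (h⁻¹)^[j-1]`. Splitting `e = P + Q` with `P ≡ 0 mod p^κ` and `t^{m+1} ∣ Q`, the bound
`n ≤ 2m + 1` kills `Q²` up to degree `n`, so there `e^j ≡ P^j + j·P^{j-1}·Q` is divisible by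
`j·p^κ` (as `v_p(j) ≤ j - 1`); hence `e²` and `S` vanish modulo `p^κ`.
-/

open PowerSeries

/-- Composition `h(u)` of formal power series, intended for `u` with zero constant term. -/
noncomputable def pcomp {R : Type*} [CommSemiring R] (h u : R⟦X⟧) : R⟦X⟧ :=
  PowerSeries.mk fun n => ∑ i ∈ Finset.range (n + 1), coeff i h * coeff n (u ^ i)

/-- Formal integral: the unique `F` with `F' = f` and `F(0) = 0`. -/
noncomputable def pint {K : Type*} [Field K] (f : K⟦X⟧) : K⟦X⟧ :=
  PowerSeries.mk fun n => if n = 0 then 0 else coeff (n - 1) f / (n : K)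

open Finset

namespace Polynomial

theorem hasseDeriv_map {R S : Type*} [Semiring R] [Semiring S] (φ : R →+* S) (f : R[X]) (j : ℕ) :
    hasseDeriv j (f.map φ) = (hasseDeriv j f).map φ := by
  ext k
  simp [hasseDeriv_coeff]

theorem aeval_add_eq_sum_hasseDeriv {R A : Type*} [CommRing R] [CommRing A] [Algebra R A]
    (F : R[X]) (y e : A) {M : ℕ} (hM : F.natDegree < M) :
    aeval (y + e) F = ∑ j ∈ range M, aeval y (hasseDeriv j F) * e ^ j := by
  have hM' : (taylor y (F.map (algebraMap R A))).natDegree < M := by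
    rw [natDegree_taylor]; exact natDegree_map_le.trans_lt hM
  rw [aeval_def, eval₂_eq_eval_map, add_comm, ← taylor_eval, eval_eq_sum_range' hM']
  simp [taylor_coeff, hasseDeriv_map, eval_map, aeval_def]

end Polynomial

namespace PowerSeries

section CommRing

variable {R : Type*} [CommRing R]

noncomputable def hasseDeriv (j : ℕ) (f : R⟦X⟧) : R⟦X⟧ :=
  mk fun k => ((k + j).choose j : R) * coeff (k + j) f

theorem coeff_hasseDeriv (j k : ℕ) (f : R⟦X⟧) :
    coeff k (hasseDeriv j f) = ((k + j).choose j : R) * coeff (k + j) f :=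
  coeff_mk _ _

@[simp]
theorem hasseDeriv_zero (f : R⟦X⟧) : hasseDeriv 0 f = f := by
  ext k
  simp [coeff_hasseDeriv]

theorem hasseDeriv_one (f : R⟦X⟧) : hasseDeriv 1 f = d⁄dX R f := by
  ext k
  simp [coeff_hasseDeriv, coeff_derivative, mul_comm]

theorem _root_.Polynomial.hasseDeriv_trunc (j M : ℕ) (f : R⟦X⟧) :
    Polynomial.hasseDeriv j (trunc M f) = trunc (M - j) (hasseDeriv j f) := by
  ext k
  simp only [Polynomial.hasseDeriv_coeff, coeff_trunc, coeff_hasseDeriv]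
  by_cases hk : k < M - j
  · rw [if_pos (by omega), if_pos hk]
  · rw [if_neg (by omega), if_neg hk, mul_zero]

theorem coeff_pow_eq_zero_of_lt {u : R⟦X⟧} (hu : constantCoeff u = 0) {n i : ℕ} (h : n < i) :
    coeff n (u ^ i) = 0 :=
  X_pow_dvd_iff.1 (pow_dvd_pow_of_dvd (X_dvd_iff.2 hu) i) n h

theorem coeff_subst_of_constantCoeff_zero {u : R⟦X⟧} (hu : constantCoeff u = 0) (f : R⟦X⟧)
    (n : ℕ) : coeff n (f.subst u) = ∑ i ∈ range (n + 1), coeff i f * coeff n (u ^ i) := by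
  rw [coeff_subst' (HasSubst.of_constantCoeff_zero' hu),
    finsum_eq_sum_of_support_subset (s := range (n + 1))]
  · simp only [smul_eq_mul]
  · intro i hi
    simp only [Function.mem_support, coe_range, Set.mem_Iio] at hi ⊢
    by_contra hni
    exact hi (by rw [coeff_pow_eq_zero_of_lt hu (by omega), smul_zero])

theorem constantCoeff_subst_of_constantCoeff_zero {u : R⟦X⟧} (hu : constantCoeff u = 0)
    (f : R⟦X⟧) : constantCoeff (f.subst u) = constantCoeff f := by
  rw [← coeff_zero_eq_constantCoeff_apply, coeff_subst_of_constantCoeff_zero hu]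
  simp

theorem X_pow_dvd_subst_sub_aeval_trunc {u : R⟦X⟧} (hu : constantCoeff u = 0) (f : R⟦X⟧)
    (M : ℕ) : X ^ M ∣ f.subst u - Polynomial.aeval u (trunc M f) := by
  have hsub := HasSubst.of_constantCoeff_zero' hu
  obtain ⟨q, hq⟩ : X ^ M ∣ f - (trunc M f : R⟦X⟧) := X_pow_dvd_iff.2 fun k hk => by
    simp [coeff_trunc, hk]
  rw [← subst_coe hsub, ← subst_sub hsub, hq, subst_mul hsub, subst_pow hsub, subst_X hsub]
  exact (pow_dvd_pow_of_dvd (X_dvd_iff.2 hu) M).mul_right _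

theorem X_pow_dvd_subst_add_sub_sum_hasseDeriv {y e : R⟦X⟧} (hy : constantCoeff y = 0)
    (he : constantCoeff e = 0) (f : R⟦X⟧) (N : ℕ) :
    X ^ (N + 1) ∣ f.subst (y + e) - ∑ j ∈ range (N + 1), (hasseDeriv j f).subst y * e ^ j := by
  set M := N + N + 1
  have htrunc : X ^ (N + 1) ∣ f.subst (y + e) - Polynomial.aeval (y + e) (trunc M f) :=
    (pow_dvd_pow X (by omega)).trans
      (X_pow_dvd_subst_sub_aeval_trunc (by rw [map_add, hy, he, add_zero]) f M)
  have hlow : ∀ j ∈ range (N + 1), X ^ (N + 1) ∣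
      (Polynomial.aeval y (Polynomial.hasseDeriv j (trunc M f)) - (hasseDeriv j f).subst y) *
        e ^ j := by
    intro j hj
    rw [mem_range] at hj
    rw [Polynomial.hasseDeriv_trunc, ← neg_sub, neg_mul, dvd_neg]
    exact ((pow_dvd_pow X (by omega)).trans
      (X_pow_dvd_subst_sub_aeval_trunc hy _ _)).mul_right _
  have hhigh : ∀ j ∈ Ico (N + 1) M, X ^ (N + 1) ∣
      Polynomial.aeval y (Polynomial.hasseDeriv j (trunc M f)) * e ^ j := by
    intro j hj
    rw [mem_Ico] at hj
    exact ((pow_dvd_pow X hj.1).trans (pow_dvd_pow_of_dvd (X_dvd_iff.2 he) j)).mul_left _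
  have hsplit : f.subst (y + e) - ∑ j ∈ range (N + 1), (hasseDeriv j f).subst y * e ^ j =
      (f.subst (y + e) - Polynomial.aeval (y + e) (trunc M f)) +
      ∑ j ∈ range (N + 1),
        (Polynomial.aeval y (Polynomial.hasseDeriv j (trunc M f)) - (hasseDeriv j f).subst y) *
          e ^ j +
      ∑ j ∈ Ico (N + 1) M, Polynomial.aeval y (Polynomial.hasseDeriv j (trunc M f)) * e ^ j := by
    rw [Polynomial.aeval_add_eq_sum_hasseDeriv _ y e (natDegree_trunc_lt f (N + N)),
      ← sum_range_add_sum_Ico _ (show N + 1 ≤ M by omega)]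
    simp only [sub_mul, sum_sub_distrib]
    ring
  rw [hsplit]
  exact dvd_add (dvd_add htrunc (dvd_sum hlow)) (dvd_sum hhigh)

end CommRing

section Field

variable {K : Type*} [Field K]

@[simp]
theorem constantCoeff_pint (f : K⟦X⟧) : constantCoeff (pint f) = 0 := by
  simp [pint, ← coeff_zero_eq_constantCoeff_apply]

theorem subst_inv_mul_subst {h v : K⟦X⟧} (hh : constantCoeff h ≠ 0) (hv : HasSubst v) :
    h⁻¹.subst v * h.subst v = 1 := by
  rw [← subst_mul hv, PowerSeries.inv_mul_cancel h hh, ← coe_substAlgHom hv, map_one]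

variable [CharZero K]

theorem derivative_pint (f : K⟦X⟧) : d⁄dX K (pint f) = f := by
  ext n
  simp only [coeff_derivative, pint, coeff_mk, Nat.succ_ne_zero, if_false, Nat.add_sub_cancel]
  push_cast
  exact div_mul_cancel₀ _ (Nat.cast_add_one_ne_zero n)

theorem hasseDeriv_pint_succ (j : ℕ) (f : K⟦X⟧) :
    hasseDeriv (j + 1) (pint f) = ((j + 1 : ℕ) : K)⁻¹ • hasseDeriv j f := by
  ext k
  have hchoose : ((k + j + 1 : ℕ) : K) * ((k + j).choose j : K) =
      ((k + j + 1).choose (j + 1) : K) * ((j + 1 : ℕ) : K) := by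
    exact_mod_cast Nat.add_one_mul_choose_eq (k + j) j
  simp only [coeff_hasseDeriv, pint, coeff_mk, coeff_smul, smul_eq_mul,
    show k + (j + 1) = k + j + 1 by omega, Nat.succ_ne_zero, if_false, Nat.add_sub_cancel]
  have hk : ((k + j + 1 : ℕ) : K) ≠ 0 := Nat.cast_ne_zero.2 (k + j).succ_ne_zero
  have hj : ((j + 1 : ℕ) : K) ≠ 0 := Nat.cast_ne_zero.2 j.succ_ne_zero
  rw [eq_inv_mul_iff_mul_eq₀ hj]
  field_simp
  linear_combination (-coeff (k + j) f) * hchoose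

end Field

section Ultrametric

variable {R : Type*} [NormedCommRing R]

/-- Over `ℚ_[p]`, `CoeffNormLE n (p ^ (-κ)) f` says `f ≡ 0 mod (p^κ, t^{n+1})`. -/
def CoeffNormLE (n : ℕ) (c : ℝ) (f : R⟦X⟧) : Prop :=
  ∀ i ≤ n, ‖coeff i f‖ ≤ c

namespace CoeffNormLE

variable {n m : ℕ} {c d : ℝ} {f g u : R⟦X⟧}

theorem nonneg (hf : CoeffNormLE n c f) : 0 ≤ c :=
  (norm_nonneg _).trans (hf 0 n.zero_le)

theorem mono (hf : CoeffNormLE n c f) (hm : m ≤ n) (hcd : c ≤ d) : CoeffNormLE m d f :=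
  fun i hi => (hf i (hi.trans hm)).trans hcd

theorem neg (hf : CoeffNormLE n c f) : CoeffNormLE n c (-f) :=
  fun i hi => by rw [map_neg, norm_neg]; exact hf i hi

theorem smul (a : R) (hf : CoeffNormLE n c f) : CoeffNormLE n (‖a‖ * c) (a • f) :=
  fun i hi => by
    rw [coeff_smul, smul_eq_mul]
    exact (norm_mul_le _ _).trans (mul_le_mul_of_nonneg_left (hf i hi) (norm_nonneg _))

theorem of_dvd_sub (hfg : X ^ (n + 1) ∣ f - g) (hg : CoeffNormLE n c g) : CoeffNormLE n c f :=
  fun i hi => by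
    rw [← sub_add_cancel f g, map_add, X_pow_dvd_iff.1 hfg i (by omega), zero_add]
    exact hg i hi

theorem one [NormOneClass R] : CoeffNormLE n 1 (1 : R⟦X⟧) :=
  fun i _ => by rw [coeff_one]; split_ifs <;> simp

variable [IsUltrametricDist R]

theorem add (hf : CoeffNormLE n c f) (hg : CoeffNormLE n c g) : CoeffNormLE n c (f + g) :=
  fun i hi => by
    rw [map_add]
    exact (IsUltrametricDist.norm_add_le_max _ _).trans (max_le (hf i hi) (hg i hi))

theorem sub (hf : CoeffNormLE n c f) (hg : CoeffNormLE n c g) : CoeffNormLE n c (f - g) := by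
  rw [sub_eq_add_neg]; exact hf.add hg.neg

theorem sum {ι : Type*} {s : Finset ι} {F : ι → R⟦X⟧} (hc : 0 ≤ c)
    (hF : ∀ j ∈ s, CoeffNormLE n c (F j)) : CoeffNormLE n c (∑ j ∈ s, F j) :=
  fun i hi => by
    rw [map_sum]
    exact IsUltrametricDist.norm_sum_le_of_forall_le_of_nonneg hc fun j hj => hF j hj i hi

theorem mul (hf : CoeffNormLE n c f) (hg : CoeffNormLE n d g) : CoeffNormLE n (c * d) (f * g) :=
  fun i hi => by
    rw [coeff_mul]
    refine IsUltrametricDist.norm_sum_le_of_forall_le_of_nonneg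
      (mul_nonneg hf.nonneg hg.nonneg) fun x hx => ?_
    rw [HasAntidiagonal.mem_antidiagonal] at hx
    exact (norm_mul_le _ _).trans
      (mul_le_mul (hf _ (by omega)) (hg _ (by omega)) (norm_nonneg _) hf.nonneg)

theorem pow_add_one (hf : CoeffNormLE n c f) (j : ℕ) :
    CoeffNormLE n (c ^ (j + 1)) (f ^ (j + 1)) := by
  induction j with
  | zero => simpa using hf
  | succ j ih => rw [pow_succ _ (j + 1), pow_succ _ (j + 1)]; exact ih.mul hf

variable [NormOneClass R]

theorem pow (hf : CoeffNormLE n 1 f) (j : ℕ) : CoeffNormLE n 1 (f ^ j) := by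
  cases j with
  | zero => rw [pow_zero]; exact one
  | succ j => simpa using hf.pow_add_one j

theorem subst (hf : ∀ k, ‖coeff k f‖ ≤ 1) (hu0 : constantCoeff u = 0) (hu : CoeffNormLE n 1 u) :
    CoeffNormLE n 1 (f.subst u) :=
  fun i hi => by
    rw [coeff_subst_of_constantCoeff_zero hu0]
    refine IsUltrametricDist.norm_sum_le_of_forall_le_of_nonneg zero_le_one fun k _ => ?_
    exact (norm_mul_le _ _).trans
      (mul_le_one₀ (hf k) (norm_nonneg _) ((hu.pow k).mono hi le_rfl i le_rfl))

end CoeffNormLE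

theorem norm_coeff_hasseDeriv_le_one [IsUltrametricDist R] [NormOneClass R] {f : R⟦X⟧}
    (hf : ∀ k, ‖coeff k f‖ ≤ 1) (j k : ℕ) : ‖coeff k (hasseDeriv j f)‖ ≤ 1 := by
  rw [coeff_hasseDeriv]
  exact (norm_mul_le _ _).trans
    (mul_le_one₀ (IsUltrametricDist.norm_natCast_le_one R _) (norm_nonneg _) (hf _))

theorem coeffNormLE_pow_add_two [IsUltrametricDist R] {n m : ℕ} {c : ℝ} {e : R⟦X⟧}
    (hnm : n ≤ 2 * m + 1) (hc : c ≤ 1) (he : CoeffNormLE n 1 e) (hem : CoeffNormLE m c e) (j : ℕ) :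
    CoeffNormLE n (max (c ^ (j + 2)) (‖((j + 2 : ℕ) : R)‖ * c)) (e ^ (j + 2)) := by
  set P : R⟦X⟧ := ((trunc (m + 1) e : Polynomial R) : R⟦X⟧)
  set Q := e - P
  have hP : ∀ N, CoeffNormLE N c P := fun N i _ => by
    rw [Polynomial.coeff_coe, coeff_trunc]
    split_ifs with hi
    · exact hem i (by omega)
    · rw [norm_zero]; exact hem.nonneg
  have hQ : CoeffNormLE n 1 Q := he.sub ((hP n).mono le_rfl hc)
  have hXQ : X ^ (m + 1) ∣ Q := X_pow_dvd_iff.2 fun i hi => by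
    simp [Q, P, Polynomial.coeff_coe, coeff_trunc, hi]
  have hdvd :
      X ^ (n + 1) ∣ e ^ (j + 2) - (P ^ (j + 2) + ((j + 2 : ℕ) : R) • (P ^ (j + 1) * Q)) := by
    have hsq := sq_dvd_add_pow_sub_sub Q P (j + 2)
    rw [add_comm P Q, sub_add_cancel, show j + 2 - 1 = j + 1 by omega] at hsq
    have hX : X ^ (n + 1) ∣ Q ^ 2 := (pow_dvd_pow X (by omega : n + 1 ≤ (m + 1) * 2)).trans
      (by rw [pow_mul]; exact pow_dvd_pow_of_dvd hXQ 2)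
    convert hX.trans hsq using 1
    rw [Nat.cast_smul_eq_nsmul, nsmul_eq_mul]
    ring
  refine CoeffNormLE.of_dvd_sub hdvd (CoeffNormLE.add ?_ ?_)
  · exact ((hP n).pow_add_one (j + 1)).mono le_rfl (le_max_left _ _)
  · refine ((((hP n).pow_add_one j).mul hQ).smul _).mono le_rfl (le_max_of_le_right ?_)
    rw [mul_one]
    exact mul_le_mul_of_nonneg_left (pow_le_of_le_one hem.nonneg hc (by omega)) (norm_nonneg _)

end Ultrametric

theorem norm_coeff_inv_le_one {K : Type*} [NormedField K] [IsUltrametricDist K] {h : K⟦X⟧}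
    (hh : ∀ k, ‖coeff k h‖ ≤ 1) (hh1 : constantCoeff h = 1) (k : ℕ) : ‖coeff k h⁻¹‖ ≤ 1 := by
  induction k using Nat.strong_induction_on with
  | _ k ih =>
    rw [coeff_inv, hh1, inv_one]
    split_ifs
    · rw [norm_one]
    · rw [neg_mul, one_mul, norm_neg]
      refine IsUltrametricDist.norm_sum_le_of_forall_le_of_nonneg zero_le_one fun x _ => ?_
      split_ifs with hx
      · exact (norm_mul_le _ _).trans (mul_le_one₀ (hh _) (norm_nonneg _) (ih _ hx))
      · rw [norm_zero]; exact zero_le_one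

end PowerSeries

theorem pcomp_eq_subst {R : Type*} [CommRing R] {u : R⟦X⟧} (hu : constantCoeff u = 0)
    (h : R⟦X⟧) : pcomp h u = h.subst u := by
  ext n
  rw [pcomp, coeff_mk, coeff_subst_of_constantCoeff_zero hu]

theorem PowerSeries.derivativeFun_eq_derivative {R : Type*} [CommSemiring R] (f : R⟦X⟧) :
    derivativeFun f = d⁄dX R f :=
  rfl

theorem newton_iterate_sub_eq {K : Type*} [Field K] [CharZero K] {g h y u : K⟦X⟧}
    (hh : constantCoeff h ≠ 0) (hy0 : constantCoeff y = 0) (hu0 : constantCoeff u = 0)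
    (hy : d⁄dX K y = g * h.subst y) :
    u - h.subst u * pint (d⁄dX K u * (h.subst u)⁻¹ - g) - y =
      (u - y) - h.subst u * ((pint h⁻¹).subst u - (pint h⁻¹).subst y) := by
  have hsy := HasSubst.of_constantCoeff_zero' hy0
  have hsu := HasSubst.of_constantCoeff_zero' hu0
  have hu_inv : (h.subst u)⁻¹ = h⁻¹.subst u :=
    (inv_eq_iff_mul_eq_one (by rwa [constantCoeff_subst_of_constantCoeff_zero hu0])).2
      (subst_inv_mul_subst hh hsu)
  suffices hint : pint (d⁄dX K u * (h.subst u)⁻¹ - g) = (pint h⁻¹).subst u - (pint h⁻¹).subst y by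
    rw [hint]; ring
  refine derivative.ext ?_ ?_
  · rw [derivative_pint, map_sub, derivative_subst hsu, derivative_subst hsy, derivative_pint, hy,
      hu_inv]
    linear_combination g * subst_inv_mul_subst hh hsy
  · rw [constantCoeff_pint, map_sub, constantCoeff_subst_of_constantCoeff_zero hu0,
      constantCoeff_subst_of_constantCoeff_zero hy0, sub_self]

theorem X_pow_dvd_newton_error_add {K : Type*} [Field K] [CharZero K] {h y e : K⟦X⟧}
    (hh : constantCoeff h ≠ 0) (hy0 : constantCoeff y = 0) (he0 : constantCoeff e = 0) (n : ℕ) :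
    let V := ∑ j ∈ range n, (hasseDeriv (j + 1) h).subst y * e ^ j
    let S := ∑ j ∈ range n,
      (hasseDeriv (j + 1) h⁻¹).subst y * (((j + 2 : ℕ) : K)⁻¹ • e ^ (j + 2))
    X ^ (n + 1) ∣ (e - h.subst (y + e) * ((pint h⁻¹).subst (y + e) - (pint h⁻¹).subst y)) +
      (h.subst y * S + e ^ 2 * V * h⁻¹.subst y + e * V * S) := by
  intro V S
  have hsy := HasSubst.of_constantCoeff_zero' hy0
  obtain ⟨a, ha⟩ : X ^ (n + 1) ∣ h.subst (y + e) - (h.subst y + e * V) := by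
    convert X_pow_dvd_subst_add_sub_sum_hasseDeriv hy0 he0 h n using 2
    rw [sum_range_succ', hasseDeriv_zero, pow_zero, mul_one, mul_sum, add_comm]
    exact congrArg₂ _ (sum_congr rfl fun j _ => by ring) rfl
  obtain ⟨b, hb⟩ : X ^ (n + 2) ∣
      (pint h⁻¹).subst (y + e) - ((pint h⁻¹).subst y + h⁻¹.subst y * e + S) := by
    convert X_pow_dvd_subst_add_sub_sum_hasseDeriv hy0 he0 (pint h⁻¹) (n + 1) using 2
    rw [sum_range_succ', sum_range_succ', hasseDeriv_zero, hasseDeriv_one, derivative_pint]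
    simp only [S, hasseDeriv_pint_succ, subst_smul hsy, smul_mul_assoc, mul_smul_comm, pow_zero,
      mul_one, zero_add, pow_one]
    abel
  exact ⟨-(a * ((pint h⁻¹).subst (y + e) - (pint h⁻¹).subst y)) - (h.subst y + e * V) * X * b,
    by linear_combination (-((pint h⁻¹).subst (y + e) - (pint h⁻¹).subst y)) * ha
      - (h.subst y + e * V) * hb - e * subst_inv_mul_subst hh hsy⟩

theorem Padic.zpow_neg_le_one (p : ℕ) [hp : Fact p.Prime] (κ : ℕ) : (p : ℝ) ^ (-(κ : ℤ)) ≤ 1 :=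
  zpow_le_one_of_nonpos₀ (by exact_mod_cast hp.1.one_le) (by omega)

theorem Padic.zpow_neg_pow_le_norm_natCast {p : ℕ} [hp : Fact p.Prime] {κ : ℕ} (hκ : 1 ≤ κ)
    (j : ℕ) : ((p : ℝ) ^ (-(κ : ℤ))) ^ j ≤ ‖((j + 1 : ℕ) : ℚ_[p])‖ := by
  have hval : padicValNat p (j + 1) ≤ j := by
    refine Nat.lt_succ_iff.1 ((Nat.pow_lt_pow_iff_right hp.1.one_lt).1 ?_)
    calc p ^ padicValNat p (j + 1) ≤ j + 1 := Nat.le_of_dvd j.succ_pos pow_padicValNat_dvd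
      _ < 2 ^ (j + 1) := Nat.lt_two_pow_self
      _ ≤ p ^ (j + 1) := Nat.pow_le_pow_left hp.1.two_le _
  rw [Padic.norm_eq_zpow_neg_valuation (Nat.cast_ne_zero.2 j.succ_ne_zero),
    Padic.valuation_natCast, ← zpow_natCast, ← zpow_mul]
  exact zpow_le_zpow_right₀ (by exact_mod_cast hp.1.one_le) (by push_cast; nlinarith)

theorem coeffNormLE_inv_smul_pow_add_two {p : ℕ} [Fact p.Prime] {n m κ : ℕ} (hκ : 1 ≤ κ)
    (hnm : n ≤ 2 * m + 1) {e : ℚ_[p]⟦X⟧} (he : CoeffNormLE n 1 e)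
    (hem : CoeffNormLE m ((p : ℝ) ^ (-(κ : ℤ))) e) (j : ℕ) :
    CoeffNormLE n ((p : ℝ) ^ (-(κ : ℤ))) (((j + 2 : ℕ) : ℚ_[p])⁻¹ • e ^ (j + 2)) := by
  have hj : ‖((j + 2 : ℕ) : ℚ_[p])‖ ≠ 0 := norm_ne_zero_iff.2 (Nat.cast_ne_zero.2 (by omega))
  refine ((coeffNormLE_pow_add_two hnm (Padic.zpow_neg_le_one p κ) he hem j).smul _).mono
    le_rfl ?_
  rw [max_eq_right, norm_inv, inv_mul_cancel_left₀ hj]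
  rw [pow_succ]
  exact mul_le_mul_of_nonneg_right (Padic.zpow_neg_pow_le_norm_natCast hκ (j + 1)) hem.nonneg

theorem coeffNormLE_newton_error {p : ℕ} [Fact p.Prime] {n m κ : ℕ} (hκ : 1 ≤ κ)
    (hnm : n ≤ 2 * m + 1) {h y e : ℚ_[p]⟦X⟧} (hh : ∀ k, ‖coeff k h‖ ≤ 1)
    (hh1 : constantCoeff h = 1) (hy0 : constantCoeff y = 0) (hy : CoeffNormLE n 1 y)
    (he0 : constantCoeff e = 0) (he : CoeffNormLE n 1 e)
    (hem : CoeffNormLE m ((p : ℝ) ^ (-(κ : ℤ))) e) :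
    CoeffNormLE n ((p : ℝ) ^ (-(κ : ℤ)))
      (e - h.subst (y + e) * ((pint h⁻¹).subst (y + e) - (pint h⁻¹).subst y)) := by
  set c := (p : ℝ) ^ (-(κ : ℤ))
  have hc : c ≤ 1 := Padic.zpow_neg_le_one p κ
  have hinv := norm_coeff_inv_le_one hh hh1
  have hdvd := X_pow_dvd_newton_error_add (by rw [hh1]; exact one_ne_zero) hy0 he0 n
  refine CoeffNormLE.of_dvd_sub (by rw [sub_neg_eq_add]; exact hdvd) (CoeffNormLE.neg ?_)
  have hV : CoeffNormLE n 1 (∑ j ∈ range n, (hasseDeriv (j + 1) h).subst y * e ^ j) :=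
    CoeffNormLE.sum zero_le_one fun j _ => (one_mul (1 : ℝ)) ▸
      (CoeffNormLE.subst (norm_coeff_hasseDeriv_le_one hh _) hy0 hy).mul (he.pow j)
  have hS : CoeffNormLE n c (∑ j ∈ range n,
      (hasseDeriv (j + 1) h⁻¹).subst y * (((j + 2 : ℕ) : ℚ_[p])⁻¹ • e ^ (j + 2))) :=
    CoeffNormLE.sum hem.nonneg fun j _ => (one_mul c) ▸
      (CoeffNormLE.subst (norm_coeff_hasseDeriv_le_one hinv _) hy0 hy).mul
        (coeffNormLE_inv_smul_pow_add_two hκ hnm he hem j)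
  have he2 : CoeffNormLE n c (e ^ 2) :=
    (coeffNormLE_pow_add_two hnm hc he hem 0).mono le_rfl <|
      max_le (pow_le_of_le_one hem.nonneg hc two_ne_zero)
        (mul_le_of_le_one_left hem.nonneg (IsUltrametricDist.norm_natCast_le_one _ _))
  refine ((one_mul c ▸ (CoeffNormLE.subst hh hy0 hy).mul hS).add ?_).add
    (one_mul c ▸ (one_mul (1 : ℝ) ▸ he.mul hV).mul hS)
  exact mul_one c ▸ (mul_one c ▸ he2.mul hV).mul (CoeffNormLE.subst hinv hy0 hy)

theorem stmt10_general (p : ℕ) [hp : Fact p.Prime] (n κ m : ℕ) (hκ : 1 ≤ κ)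
    (hm : n ≤ 2 * m + 1)
    (g h : PowerSeries ℚ_[p])
    (hhint : ∀ i, ‖coeff i h‖ ≤ 1) (hh1 : constantCoeff h = 1)
    (y : PowerSeries ℚ_[p])
    (hy0 : constantCoeff y = 0) (hy : derivativeFun y = g * pcomp h y)
    (hyint : ∀ i ≤ n, ‖coeff i y‖ ≤ 1)
    (u : PowerSeries ℚ_[p])
    (huint : ∀ i, ‖coeff i u‖ ≤ 1) (hu0 : constantCoeff u = 0)
    (hucong : ∀ i ≤ m, ‖coeff i (u - y)‖ ≤ (p : ℝ) ^ (-(κ : ℤ))) :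
    ∀ i ≤ n,
      ‖coeff i
          ((u - pcomp h u * pint (derivativeFun u * (pcomp h u)⁻¹ - g)) - y)‖ ≤
        (p : ℝ) ^ (-(κ : ℤ)) := by
  have hh0 : constantCoeff h ≠ 0 := by rw [hh1]; exact one_ne_zero
  have he0 : constantCoeff (u - y) = 0 := by rw [map_sub, hu0, hy0, sub_zero]
  have hbound := coeffNormLE_newton_error hκ hm hhint hh1 hy0 hyint he0
    (CoeffNormLE.sub (fun i _ => huint i) hyint) hucong
  rw [add_sub_cancel] at hbound
  rw [pcomp_eq_subst hy0, derivativeFun_eq_derivative] at hy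
  rw [pcomp_eq_subst hu0, derivativeFun_eq_derivative,
    newton_iterate_sub_eq hh0 hy0 hu0 hy]
  exact hbound

/-- if `u ∈ ℤ_p⟦t⟧`, `u(0) = 0` and `u ≡ Y(g) (mod (p^κ, t^{m+1}))` with
`n ≤ 2m + 1`, then the exact Newton iterate `N_g(u) = u - h(u)·∫(u'/h(u) - g)` satisfies
`N_g(u) ≡ Y(g) (mod (p^κ, t^{n+1}))`.  Membership `x ∈ p^κ ℤ_p` is expressed as
`‖x‖ ≤ p^{-κ}`, and `f ∈ ℤ_p⟦t⟧` as `‖coeff i f‖ ≤ 1` for all `i`. -/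
theorem stmt10 (p : ℕ) [hp : Fact p.Prime] (n κ m : ℕ) (hn : 1 ≤ n) (hκ : 1 ≤ κ)
    (hκ2 : p = 2 → 2 ≤ κ) (hm : n ≤ 2 * m + 1)
    (g h : PowerSeries ℚ_[p])
    (hg : ∀ i, ‖coeff i g‖ ≤ 1)
    (hhint : ∀ i, ‖coeff i h‖ ≤ 1) (hh1 : constantCoeff h = 1)
    (y : PowerSeries ℚ_[p])
    (hy0 : constantCoeff y = 0) (hy : derivativeFun y = g * pcomp h y)
    (hyint : ∀ i ≤ n, ‖coeff i y‖ ≤ 1)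
    (u : PowerSeries ℚ_[p])
    (huint : ∀ i, ‖coeff i u‖ ≤ 1) (hu0 : constantCoeff u = 0)
    (hucong : ∀ i ≤ m, ‖coeff i (u - y)‖ ≤ (p : ℝ) ^ (-(κ : ℤ))) :
    ∀ i ≤ n,
      ‖coeff i
          ((u - pcomp h u * pint (derivativeFun u * (pcomp h u)⁻¹ - g)) - y)‖ ≤
        (p : ℝ) ^ (-(κ : ℤ)) :=
  stmt10_general p (hp := hp) n κ m hκ hm g h hhint hh1 y hy0 hy hyint u huint hu0 hucong
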